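/- arXiv:2408.07250 — 2 statements merged into one kernel-verified Lean document; each statement's English description precedes it below -/
import Mathlib

section
/- If $w_i < w_j$ and $p_i \ne p_j$, then the domain region $Dom(p_i,p_j)$ (with weighted distance $\|x-p\|/w$) is a compact convex set containing $p_i$ but not $p_j$. -/
/-!
For `a < b`, the inequality `b ‖x - p‖ ≤ a ‖x - p'‖` squares to a quadratic inequality in `x` whose
leading coefficient `b² - a²` is positive; completing the square turns it into the Apollonius ball
with centre `p - a² / (b² - a²) • (p' - p)` and radius `a b ‖p' - p‖ / (b² - a²)`. A closed ball in
the plane is compact and convex; `p` satisfies the inequality trivially and `p'` violates it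
because `‖p' - p‖ > 0`.
-/

open Metric

section Apollonius

variable {E : Type*} [NormedAddCommGroup E] [InnerProductSpace ℝ E]

theorem sq_mul_norm_sub_sub_sq_mul_norm_sub (x p p' : E) {a b : ℝ} (hab : b ^ 2 - a ^ 2 ≠ 0) :
    b ^ 2 * ‖x - p‖ ^ 2 - a ^ 2 * ‖x - p'‖ ^ 2 =
      (b ^ 2 - a ^ 2) * (‖x - (p - (a ^ 2 / (b ^ 2 - a ^ 2)) • (p' - p))‖ ^ 2 -
        (a * b * ‖p' - p‖ / (b ^ 2 - a ^ 2)) ^ 2) := by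
  have hxp' : x - p' = (x - p) - (p' - p) := by abel
  have hxq : x - (p - (a ^ 2 / (b ^ 2 - a ^ 2)) • (p' - p)) =
      (x - p) + (a ^ 2 / (b ^ 2 - a ^ 2)) • (p' - p) := by abel
  rw [hxp', hxq]
  generalize x - p = u
  generalize p' - p = v
  rw [norm_sub_sq_real, norm_add_sq_real, norm_smul, real_inner_smul_right, Real.norm_eq_abs,
    mul_pow, sq_abs]
  field_simp
  ring

theorem setOf_norm_sub_div_le_eq_closedBall (p p' : E) {a b : ℝ} (ha : 0 < a) (hab : a < b) :
    {x : E | ‖x - p‖ / a ≤ ‖x - p'‖ / b} =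
      closedBall (p - (a ^ 2 / (b ^ 2 - a ^ 2)) • (p' - p)) (a * b * ‖p' - p‖ / (b ^ 2 - a ^ 2)) := by
  have hb : 0 < b := ha.trans hab
  have hc : 0 < b ^ 2 - a ^ 2 := by nlinarith
  ext x
  rw [Set.mem_ofPred_eq, mem_closedBall, dist_eq_norm, div_le_div_iff₀ ha hb,
    ← pow_le_pow_iff_left₀ (by positivity) (by positivity) two_ne_zero,
    ← pow_le_pow_iff_left₀ (norm_nonneg _) (by positivity) two_ne_zero, ← sub_nonpos, mul_pow,
    mul_pow, mul_comm (‖x - p‖ ^ 2), mul_comm (‖x - p'‖ ^ 2),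
    sq_mul_norm_sub_sub_sq_mul_norm_sub x p p' hc.ne', ← sub_nonpos (b := (_ : ℝ) ^ 2)]
  exact ⟨fun h => nonpos_of_mul_nonpos_right h hc, mul_nonpos_of_nonneg_of_nonpos hc.le⟩

end Apollonius

theorem dom_compact_convex
    (pi pj : EuclideanSpace ℝ (Fin 2)) (hp : pi ≠ pj)
    (wi wj : ℝ) (hwi : 0 < wi) (hij : wi < wj) :
    IsCompact {x : EuclideanSpace ℝ (Fin 2) | ‖x - pi‖ / wi ≤ ‖x - pj‖ / wj} ∧
    Convex ℝ {x : EuclideanSpace ℝ (Fin 2) | ‖x - pi‖ / wi ≤ ‖x - pj‖ / wj} ∧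
    pi ∈ {x : EuclideanSpace ℝ (Fin 2) | ‖x - pi‖ / wi ≤ ‖x - pj‖ / wj} ∧
    pj ∉ {x : EuclideanSpace ℝ (Fin 2) | ‖x - pi‖ / wi ≤ ‖x - pj‖ / wj} := by
  have hdom := setOf_norm_sub_div_le_eq_closedBall pi pj hwi hij
  refine ⟨hdom ▸ isCompact_closedBall _ _, hdom ▸ convex_closedBall _ _, ?_, ?_⟩
  · simp only [Set.mem_ofPred_eq, sub_self, norm_zero, zero_div]
    exact div_nonneg (norm_nonneg _) (hwi.trans hij).le
  · simp only [Set.mem_ofPred_eq, sub_self, norm_zero, zero_div, not_le]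
    exact div_pos (norm_pos_iff.mpr (sub_ne_zero.mpr hp.symm)) hwi
end

section
/- For distinct points $p_i, p_j$ and positive weights with $w_i < w_j$, the multiplicatively weighted Voronoi region of the lighter point in the two-point diagram, $Dom(p_i, p_j)$, is bounded, while $Dom(p_j, p_i)$ is unbounded. -/
theorem lighter_bounded_heavier_unbounded
    (pi pj : EuclideanSpace ℝ (Fin 2)) (hp : pi ≠ pj)
    (wi wj : ℝ) (hwi : 0 < wi) (hij : wi < wj) :
    Bornology.IsBounded {x : EuclideanSpace ℝ (Fin 2) | ‖x - pi‖ / wi ≤ ‖x - pj‖ / wj} ∧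
    ¬ Bornology.IsBounded {x : EuclideanSpace ℝ (Fin 2) | ‖x - pj‖ / wj ≤ ‖x - pi‖ / wi} := by
  have hwj : (0:ℝ) < wj := hwi.trans hij
  have hdiff : (0:ℝ) < wj - wi := by linarith
  set d : ℝ := ‖pi - pj‖ with hd
  have hd0 : 0 < d := by
    rw [hd, norm_pos_iff, sub_ne_zero]; exact hp
  set R : ℝ := wi * d / (wj - wi) with hR
  have hR0 : 0 < R := by positivity
  constructor
  · apply (Metric.isBounded_closedBall (x := pi) (r := R)).subset
    intro x hx
    simp only [Set.mem_setOf_eq] at hx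
    rw [div_le_div_iff₀ hwi hwj] at hx
    have htri : ‖x - pj‖ ≤ ‖x - pi‖ + d := by
      have := norm_add_le (x - pi) (pi - pj)
      simpa [sub_add_sub_cancel] using this
    have hle : ‖x - pi‖ ≤ R := by
      rw [hR, le_div_iff₀ hdiff]
      nlinarith
    simpa [Metric.mem_closedBall, dist_eq_norm] using hle
  · intro hb
    obtain ⟨C, hC⟩ := hb.exists_norm_le
    set r : ℝ := max R (C + ‖pi‖ + 1) with hr
    set v : EuclideanSpace ℝ (Fin 2) := EuclideanSpace.single 0 (1:ℝ) with hv
    have hvn : ‖v‖ = 1 := by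
      rw [hv, EuclideanSpace.norm_single]; norm_num
    set x : EuclideanSpace ℝ (Fin 2) := pi + r • v with hxdef
    have hr0 : 0 ≤ r := le_trans hR0.le (le_max_left _ _)
    have hxpi : ‖x - pi‖ = r := by
      rw [hxdef, add_sub_cancel_left, norm_smul, hvn]
      simp [abs_of_nonneg hr0]
    have hmem : x ∈ {y : EuclideanSpace ℝ (Fin 2) | ‖y - pj‖ / wj ≤ ‖y - pi‖ / wi} := by
      simp only [Set.mem_setOf_eq]
      rw [div_le_div_iff₀ hwj hwi, hxpi]
      have htri : ‖x - pj‖ ≤ r + d := by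
        have := norm_add_le (x - pi) (pi - pj)
        rw [sub_add_sub_cancel, hxpi] at this
        exact this
      have hrR : R ≤ r := le_max_left _ _
      have : wi * d ≤ r * (wj - wi) := by
        rw [hR, div_le_iff₀ hdiff] at hrR
        linarith
      nlinarith
    have hxle := hC x hmem
    have : r - ‖pi‖ ≤ ‖x‖ := by
      have := norm_add_le pi (r • v)
      have h2 : ‖r • v‖ ≤ ‖pi + r • v‖ + ‖pi‖ := by
        have := norm_sub_le (pi + r • v) pi
        simpa [add_sub_cancel_left] using this
      rw [norm_smul, hvn, mul_one, Real.norm_eq_abs, abs_of_nonneg hr0] at h2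
      rw [hxdef]
      linarith
    have : C + 1 ≤ ‖x‖ := by
      have hr2 : C + ‖pi‖ + 1 ≤ r := le_max_right _ _
      linarith
    linarith
end
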